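/- In the convolution algebra (ℂ[X])*, with ξ defined by ξ(X^n) = δ_{n,1}, the augmentation ideal I = { f : f(1) = 0 } satisfies I^n = ⟨ξ^n⟩ (the principal ideal generated by the n-th convolution power of ξ) for all n ≥ 0. -/

import Mathlib

/-!
The transported product makes `Θ` a ring isomorphism `(ℂ[X])* ≃+* ℂ[[Z]]`; it sends `ξ` to `Z`
and `f ↦ f(1)` to the constant coefficient, so `I` is the preimage of the ideal `(Z)` and hence
equals `(ξ)`. Powers of a principal ideal are principal: `Iⁿ = (ξⁿ)`.
-/

open Polynomial PowerSeries Finset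

noncomputable section

/-- The full linear dual of the polynomial algebra `ℂ[X]`. -/
abbrev DualP : Type := Module.Dual ℂ (Polynomial ℂ)

/-- The linear isomorphism `Φ : ℂ^ℕ → (ℂ[X])*`, `Φ z (X^m) = z m`. -/
noncomputable def Phi : (ℕ → ℂ) ≃ₗ[ℂ] DualP :=
  (Polynomial.basisMonomials ℂ).constr ℂ

lemma Phi_apply (z : ℕ → ℂ) (m : ℕ) : Phi z ((X : Polynomial ℂ) ^ m) = z m := by
  have h : ((X : Polynomial ℂ) ^ m) = Polynomial.basisMonomials ℂ m := by
    simp [coe_basisMonomials, X_pow_eq_monomial]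
  rw [h, Phi, Module.Basis.constr_basis]

/-- The underlying bijection of `Θ : (ℂ[X])* → ℂ[[Z]]`, `f ↦ ∑ₖ f(Xᵏ/k!) Zᵏ`. -/
noncomputable def eTheta : DualP ≃ PowerSeries ℂ where
  toFun f := PowerSeries.mk fun k => f ((X : Polynomial ℂ) ^ k) / (k.factorial : ℂ)
  invFun φ := Phi fun n => (n.factorial : ℂ) * PowerSeries.coeff n φ
  left_inv f := by
    refine (Polynomial.basisMonomials ℂ).ext fun n => ?_
    have h : Polynomial.basisMonomials ℂ n = ((X : Polynomial ℂ) ^ n) := by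
      simp [coe_basisMonomials, X_pow_eq_monomial]
    rw [h, Phi_apply]
    have hn : ((n.factorial : ℂ)) ≠ 0 := by
      exact_mod_cast Nat.factorial_ne_zero n
    rw [PowerSeries.coeff_mk]
    field_simp
  right_inv φ := by
    ext n
    rw [PowerSeries.coeff_mk, Phi_apply]
    have hn : ((n.factorial : ℂ)) ≠ 0 := by
      exact_mod_cast Nat.factorial_ne_zero n
    field_simp

lemma eTheta_apply (f : DualP) :
    eTheta f = PowerSeries.mk fun k => f ((X : Polynomial ℂ) ^ k) / (k.factorial : ℂ) := rfl

lemma eTheta_symm_apply_pow (φ : PowerSeries ℂ) (n : ℕ) :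
    eTheta.symm φ ((X : Polynomial ℂ) ^ n) = (n.factorial : ℂ) * PowerSeries.coeff n φ :=
  Phi_apply _ n

lemma eTheta_add (f g : DualP) : eTheta (f + g) = eTheta f + eTheta g := by
  ext n
  simp [eTheta_apply, add_div]

lemma eTheta_smul (c : ℂ) (f : DualP) : eTheta (c • f) = c • eTheta f := by
  ext n
  simp [eTheta_apply, mul_div_assoc]

lemma eTheta_symm_add (x y : PowerSeries ℂ) :
    eTheta.symm (x + y) = eTheta.symm x + eTheta.symm y := by
  apply eTheta.injective
  rw [eTheta_add, eTheta.apply_symm_apply, eTheta.apply_symm_apply, eTheta.apply_symm_apply]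

lemma eTheta_symm_smul (c : ℂ) (x : PowerSeries ℂ) :
    eTheta.symm (c • x) = c • eTheta.symm x := by
  apply eTheta.injective
  rw [eTheta_smul, eTheta.apply_symm_apply, eTheta.apply_symm_apply]

/-- The convolution (Hurwitz) ring structure on `(ℂ[X])*`, transported through `Θ`.
By `mul_apply_pow` below, the product is precisely the convolution product
`(f*g)(Xⁿ) = ∑ₖ (n choose k) f(Xᵏ) g(Xⁿ⁻ᵏ)`. -/
noncomputable instance : CommRing DualP :=
  { (inferInstance : AddCommGroup DualP) with
    mul := fun f g => eTheta.symm (eTheta f * eTheta g)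
    one := eTheta.symm 1
    mul_assoc := fun a b c => by
      show eTheta.symm (eTheta (eTheta.symm _) * _) = eTheta.symm (_ * eTheta (eTheta.symm _))
      rw [eTheta.apply_symm_apply, eTheta.apply_symm_apply, mul_assoc]
    one_mul := fun a => by
      show eTheta.symm (eTheta (eTheta.symm 1) * eTheta a) = a
      rw [eTheta.apply_symm_apply, one_mul, eTheta.symm_apply_apply]
    mul_one := fun a => by
      show eTheta.symm (eTheta a * eTheta (eTheta.symm 1)) = a
      rw [eTheta.apply_symm_apply, mul_one, eTheta.symm_apply_apply]
    left_distrib := fun a b c => by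
      show eTheta.symm (eTheta a * eTheta (b + c)) = eTheta.symm _ + eTheta.symm _
      rw [eTheta_add, mul_add, eTheta_symm_add]
    right_distrib := fun a b c => by
      show eTheta.symm (eTheta (a + b) * eTheta c) = eTheta.symm _ + eTheta.symm _
      rw [eTheta_add, add_mul, eTheta_symm_add]
    zero_mul := fun a => by
      show eTheta.symm (eTheta 0 * eTheta a) = 0
      have h0 : eTheta (0 : DualP) = 0 := by
        ext n; simp [eTheta_apply]
      rw [h0, zero_mul, ← h0, eTheta.symm_apply_apply]
    mul_zero := fun a => by
      show eTheta.symm (eTheta a * eTheta 0) = 0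
      have h0 : eTheta (0 : DualP) = 0 := by
        ext n; simp [eTheta_apply]
      rw [h0, mul_zero, ← h0, eTheta.symm_apply_apply]
    mul_comm := fun a b => by
      show eTheta.symm (eTheta a * eTheta b) = eTheta.symm (eTheta b * eTheta a)
      rw [mul_comm] }

lemma mul_def (f g : DualP) : f * g = eTheta.symm (eTheta f * eTheta g) := rfl

noncomputable instance : Algebra ℂ DualP :=
  Algebra.ofModule
    (fun c f g => by
      rw [mul_def, mul_def, eTheta_smul, smul_mul_assoc, eTheta_symm_smul])
    (fun c f g => by
      rw [mul_def, mul_def, eTheta_smul, mul_smul_comm, eTheta_symm_smul])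

/-- The product on `(ℂ[X])*` is the convolution product. -/
lemma mul_apply_pow (f g : DualP) (n : ℕ) :
    (f * g) ((X : Polynomial ℂ) ^ n)
      = ∑ k ∈ Finset.range (n + 1),
          (n.choose k : ℂ) * f ((X : Polynomial ℂ) ^ k) * g ((X : Polynomial ℂ) ^ (n - k)) := by
  rw [mul_def, eTheta_symm_apply_pow, PowerSeries.coeff_mul,
    Finset.Nat.sum_antidiagonal_eq_sum_range_succ_mk, Finset.mul_sum]
  refine Finset.sum_congr rfl fun k hk => ?_
  have hk' : k ≤ n := Nat.lt_succ_iff.mp (Finset.mem_range.mp hk)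
  rw [eTheta_apply, eTheta_apply, PowerSeries.coeff_mk, PowerSeries.coeff_mk,
    Nat.cast_choose ℂ hk']
  have h1 : ((k.factorial : ℂ)) ≠ 0 := by exact_mod_cast Nat.factorial_ne_zero k
  have h2 : (((n - k).factorial : ℂ)) ≠ 0 := by exact_mod_cast Nat.factorial_ne_zero (n - k)
  field_simp

lemma one_apply_pow (n : ℕ) :
    (1 : DualP) ((X : Polynomial ℂ) ^ n) = if n = 0 then 1 else 0 := by
  show eTheta.symm 1 _ = _
  rw [eTheta_symm_apply_pow, PowerSeries.coeff_one]
  split <;> simp_all [Nat.factorial]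

lemma mul_apply_one (f g : DualP) : (f * g) (1 : Polynomial ℂ) = f 1 * g 1 := by
  have := mul_apply_pow f g 0
  simpa using this

/-- The augmentation ideal `I = ker ε₊` of `(ℂ[X])*`, where `ε₊(f) = f(1)`. -/
noncomputable def Iaug : Ideal DualP where
  carrier := {f | f (1 : Polynomial ℂ) = 0}
  add_mem' := by
    intro a b ha hb
    simp only [Set.mem_setOf_eq] at *
    simp [ha, hb]
  zero_mem' := by simp
  smul_mem' := by
    intro c f hf
    simp only [Set.mem_setOf_eq] at *
    rw [smul_eq_mul, mul_apply_one, hf, mul_zero]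

lemma mem_Iaug_iff (f : DualP) : f ∈ Iaug ↔ f (1 : Polynomial ℂ) = 0 := Iff.rfl

/-- `ξ ∈ (ℂ[X])*`, `ξ(Xⁿ) = δ_{n,1}`. -/
noncomputable def xiD : DualP := Phi fun n => if n = 1 then 1 else 0

/-- `φ_λ : ℂ[X] → ℂ`, the algebra map with `φ_λ(X) = λ`, i.e. evaluation at `λ`. -/
noncomputable def phiL (l : ℂ) : DualP := (Polynomial.aeval l).toLinearMap

lemma phiL_apply (l : ℂ) (p : Polynomial ℂ) : phiL l p = Polynomial.aeval l p := rfl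

/-- Membership in the finite (Sweedler) dual `ℂ[X]°`: vanishing on a non-zero ideal. -/
def IsFinDual (f : DualP) : Prop :=
  ∃ I : Ideal (Polynomial ℂ), I ≠ ⊥ ∧ ∀ p ∈ I, f p = 0

/-- The `n`-th power `Jⁿ` of the augmentation ideal `J` of the finite dual `ℂ[X]°`,
described as a set: the additive closure of products of `n` elements of `J`. -/
noncomputable def JpowSet (n : ℕ) : AddSubmonoid DualP :=
  AddSubmonoid.closure
    {y | ∃ g : Fin n → DualP,
      (∀ i, IsFinDual (g i) ∧ g i (1 : Polynomial ℂ) = 0) ∧ y = ∏ i, g i}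

end

noncomputable def thetaRingEquiv : DualP ≃+* PowerSeries ℂ :=
  { eTheta with
    map_mul' := fun f g => by rw [Equiv.toFun_as_coe, mul_def, eTheta.apply_symm_apply]
    map_add' := eTheta_add }

lemma thetaRingEquiv_apply (f : DualP) : thetaRingEquiv f = eTheta f := rfl

lemma constantCoeff_thetaRingEquiv (f : DualP) :
    PowerSeries.constantCoeff (thetaRingEquiv f) = f 1 := by
  rw [← PowerSeries.coeff_zero_eq_constantCoeff_apply, thetaRingEquiv_apply, eTheta_apply,
    PowerSeries.coeff_mk, pow_zero, Nat.factorial_zero, Nat.cast_one, div_one]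

lemma thetaRingEquiv_xiD : thetaRingEquiv xiD = PowerSeries.X := by
  ext n
  rw [thetaRingEquiv_apply, eTheta_apply, PowerSeries.coeff_mk, xiD, Phi_apply,
    PowerSeries.coeff_X]
  split_ifs with h <;> simp [h]

lemma Iaug_eq_comap_span_X :
    Iaug = (Ideal.span {PowerSeries.X}).comap thetaRingEquiv := by
  ext f
  rw [Ideal.mem_comap, Ideal.mem_span_singleton, PowerSeries.X_dvd_iff,
    constantCoeff_thetaRingEquiv, mem_Iaug_iff]

lemma Iaug_eq_span_xiD : Iaug = Ideal.span {xiD} := by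
  rw [Iaug_eq_comap_span_X, ← Ideal.map_symm, Ideal.map_span, Set.image_singleton,
    ← thetaRingEquiv_xiD, RingEquiv.symm_apply_apply]

/-- In the convolution algebra `(ℂ[X])*`, the augmentation ideal satisfies `Iⁿ = ⟨ξⁿ⟩`
for all `n ≥ 0`. -/
theorem Iaug_pow_eq_span_xi_pow :
    ∀ n : ℕ, Iaug ^ n = Ideal.span {xiD ^ n} := by
  intro n
  rw [Iaug_eq_span_xiD, Ideal.span_singleton_pow]
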